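/- arXiv:1610.04049 — 6 statements merged into one kernel-verified Lean document; each statement's English description precedes it below -/
import Mathlib

section
/- The group with presentation ⟨i, τ₁, τ₂ | i² = 1, τ₁ i τ₂ = i, τ₂ i τ₁ = i, τ₁ i τ₁ = τ₂, τ₂ i τ₂ = τ₁⟩ is isomorphic to the free product ℤ/2ℤ * ℤ/3ℤ, via the identification ρ₁ = i·τ₁, which satisfies ρ₁³ = 1. -/
/-- Relations of the group `𝔊` of elementary transformations of marked boxes,
on generators `i = of 0`, `τ₁ = of 1`, `τ₂ = of 2`. -/
def markedBoxRels : Set (FreeGroup (Fin 3)) :=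
  { FreeGroup.of 0 * FreeGroup.of 0,
    FreeGroup.of 1 * FreeGroup.of 0 * FreeGroup.of 2 * (FreeGroup.of 0)⁻¹,
    FreeGroup.of 2 * FreeGroup.of 0 * FreeGroup.of 1 * (FreeGroup.of 0)⁻¹,
    FreeGroup.of 1 * FreeGroup.of 0 * FreeGroup.of 1 * (FreeGroup.of 2)⁻¹,
    FreeGroup.of 2 * FreeGroup.of 0 * FreeGroup.of 2 * (FreeGroup.of 1)⁻¹ }

/-!
Since `τ₁ i τ₁ = τ₂` and `τ₂ i τ₁ = i`, the element `ρ₁ = i τ₁` satisfies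
`ρ₁³ = i (τ₁ i τ₁) i τ₁ = i (τ₂ i τ₁) = i² = 1`, and `τ₁ = i ρ₁`, `τ₂ = i ρ₁²`.
Conversely, in any group with `a² = r³ = 1` the elements `a, a r, a r²` satisfy the five
relations, so `i ↦ a, τ₁ ↦ a r, τ₂ ↦ a r²` and `a ↦ i, r ↦ ρ₁` are mutually inverse
homomorphisms between the presented group and `ℤ/2 * ℤ/3`.
-/

noncomputable def zmodPowersHom (n : ℕ) {G : Type*} [Group G] (g : G) (hg : g ^ n = 1) :
    Multiplicative (ZMod n) →* G :=
  AddMonoidHom.toMultiplicativeLeft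
    (ZMod.lift n ⟨zmultiplesHom (Additive G) (Additive.ofMul g), by
      simpa [← ofMul_pow] using congrArg Additive.ofMul hg⟩)

@[simp]
lemma zmodPowersHom_ofAdd_one (n : ℕ) {G : Type*} [Group G] (g : G) (hg : g ^ n = 1) :
    zmodPowersHom n g hg (Multiplicative.ofAdd 1) = g := by
  have h : ((1 : ℤ) : ZMod n) = 1 := Int.cast_one
  simp [zmodPowersHom, ← h, ZMod.lift_coe, -Int.cast_one]

lemma MonoidHom.ext_mzmod {n : ℕ} [NeZero n] {M : Type*} [Monoid M]
    {f g : Multiplicative (ZMod n) →* M}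
    (h : f (Multiplicative.ofAdd 1) = g (Multiplicative.ofAdd 1)) : f = g := by
  refine MonoidHom.ext fun x => ?_
  have hx : x = Multiplicative.ofAdd (1 : ZMod n) ^ (Multiplicative.toAdd x).val := by
    rw [← ofAdd_nsmul, nsmul_one, ZMod.natCast_zmod_val, ofAdd_toAdd]
  rw [hx, map_pow, map_pow, h]

lemma ZMod.ofAdd_one_pow_self (n : ℕ) : Multiplicative.ofAdd (1 : ZMod n) ^ n = 1 := by
  rw [← ofAdd_nsmul, nsmul_one, ZMod.natCast_self, ofAdd_zero]

namespace MarkedBox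

local notation "𝔊" => PresentedGroup markedBoxRels

def i : 𝔊 := PresentedGroup.of 0
def τ₁ : 𝔊 := PresentedGroup.of 1
def τ₂ : 𝔊 := PresentedGroup.of 2

lemma i_mul_i : i * i = 1 :=
  PresentedGroup.one_of_mem (by simp [markedBoxRels])

lemma τ₂_mul_i_mul_τ₁ : τ₂ * i * τ₁ = i :=
  mul_inv_eq_one.mp <| PresentedGroup.one_of_mem (by simp [markedBoxRels])

lemma τ₁_mul_i_mul_τ₁ : τ₁ * i * τ₁ = τ₂ :=
  mul_inv_eq_one.mp <| PresentedGroup.one_of_mem (by simp [markedBoxRels])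

lemma i_mul_i_mul (x : 𝔊) : i * (i * x) = x := by
  rw [← mul_assoc, i_mul_i, one_mul]

lemma i_mul_τ₁_pow_three : (i * τ₁) ^ 3 = 1 :=
  calc (i * τ₁) ^ 3 = i * ((τ₁ * i * τ₁) * i * τ₁) := by simp only [pow_three, mul_assoc]
    _ = 1 := by rw [τ₁_mul_i_mul_τ₁, τ₂_mul_i_mul_τ₁, i_mul_i]

section Lift

variable {H : Type*} [Group H] {a r : H}

lemma lift_eq_one_of_mem_markedBoxRels (ha : a ^ 2 = 1) (hr : r ^ 3 = 1) :
    ∀ w ∈ markedBoxRels, FreeGroup.lift ![a, a * r, a * r ^ 2] w = 1 := by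
  have haa : a * a = 1 := by rw [← sq, ha]
  have ha' : ∀ x, a * (a * x) = x := fun x => by rw [← mul_assoc, haa, one_mul]
  have hr' : ∀ x, r * (r * (r * x)) = x := fun x => by
    rw [← mul_assoc, ← mul_assoc, ← pow_three', hr, one_mul]
  have ha_inv : a⁻¹ = a := inv_eq_of_mul_eq_one_left haa
  have hr_inv : r⁻¹ = r * r := inv_eq_of_mul_eq_one_left (by rw [← pow_three', hr])
  rintro w (rfl | rfl | rfl | rfl | rfl) <;>
    simp [sq, haa, ha_inv, hr_inv, mul_assoc, ha', hr']

def lift (ha : a ^ 2 = 1) (hr : r ^ 3 = 1) : 𝔊 →* H :=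
  PresentedGroup.toGroup (lift_eq_one_of_mem_markedBoxRels ha hr)

@[simp] lemma lift_i (ha : a ^ 2 = 1) (hr : r ^ 3 = 1) : lift ha hr i = a :=
  PresentedGroup.toGroup.of _

@[simp] lemma lift_τ₁ (ha : a ^ 2 = 1) (hr : r ^ 3 = 1) :
    lift ha hr τ₁ = a * r :=
  PresentedGroup.toGroup.of _

@[simp] lemma lift_τ₂ (ha : a ^ 2 = 1) (hr : r ^ 3 = 1) :
    lift ha hr τ₂ = a * r ^ 2 :=
  PresentedGroup.toGroup.of _

@[simp] lemma lift_i_mul_τ₁ (ha : a ^ 2 = 1) (hr : r ^ 3 = 1) :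
    lift ha hr (i * τ₁) = r := by
  rw [map_mul, lift_i, lift_τ₁, ← mul_assoc, ← sq, ha, one_mul]

end Lift

local notation "𝒞" => Monoid.Coprod (Multiplicative (ZMod 2)) (Multiplicative (ZMod 3))

noncomputable def toCoprod : 𝔊 →* 𝒞 :=
  lift (a := Monoid.Coprod.inl (.ofAdd 1)) (r := Monoid.Coprod.inr (.ofAdd 1))
    (by rw [← map_pow, ZMod.ofAdd_one_pow_self, map_one])
    (by rw [← map_pow, ZMod.ofAdd_one_pow_self, map_one])

noncomputable def ofCoprod : 𝒞 →* 𝔊 :=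
  Monoid.Coprod.lift (zmodPowersHom 2 i (by rw [sq, i_mul_i]))
    (zmodPowersHom 3 (i * τ₁) i_mul_τ₁_pow_three)

lemma ofCoprod_comp_toCoprod : ofCoprod.comp toCoprod = MonoidHom.id 𝔊 := by
  refine PresentedGroup.ext fun x => ?_
  fin_cases x
  · show ofCoprod (toCoprod i) = i
    simp [toCoprod, ofCoprod]
  · show ofCoprod (toCoprod τ₁) = τ₁
    simp [toCoprod, ofCoprod, i_mul_i_mul]
  · show ofCoprod (toCoprod τ₂) = τ₂
    simp [toCoprod, ofCoprod, sq, ← mul_assoc, i_mul_i, τ₁_mul_i_mul_τ₁]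

lemma toCoprod_comp_ofCoprod : toCoprod.comp ofCoprod = MonoidHom.id 𝒞 := by
  refine Monoid.Coprod.hom_ext (MonoidHom.ext_mzmod ?_) (MonoidHom.ext_mzmod ?_)
  · simp [toCoprod, ofCoprod]
  · simp [toCoprod, ofCoprod]

noncomputable def mulEquivCoprod : 𝔊 ≃* 𝒞 :=
  toCoprod.toMulEquiv ofCoprod ofCoprod_comp_toCoprod toCoprod_comp_ofCoprod

end MarkedBox

/-- The group `⟨i, τ₁, τ₂ | i² = 1, τ₁iτ₂ = i, τ₂iτ₁ = i, τ₁iτ₁ = τ₂, τ₂iτ₂ = τ₁⟩`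
is isomorphic to `ℤ/2ℤ * ℤ/3ℤ`, and the element `ρ₁ = i·τ₁` satisfies `ρ₁³ = 1`. -/
theorem markedBoxGroup_iso_coprod :
    ((PresentedGroup.of (rels := markedBoxRels) 0 * PresentedGroup.of 1) ^ 3 = 1) ∧
    Nonempty (PresentedGroup markedBoxRels ≃*
      Monoid.Coprod (Multiplicative (ZMod 2)) (Multiplicative (ZMod 3))) :=
  ⟨MarkedBox.i_mul_τ₁_pow_three, ⟨MarkedBox.mulEquivCoprod⟩⟩
end

section
/- Let ζ_t, ζ_b ∈ (-1,1), let A = [[ζ_tζ_b−1, ζ_t(1−ζ_tζ_b), ζ_b−ζ_t], [ζ_b−ζ_t, 1−ζ_tζ_b, ζ_tζ_b−1], [0, 1−ζ_t², 0]] and D = [[1, −ζ_t, −ζ_b], [−ζ_t, 1, ζ_tζ_b], [−ζ_b, ζ_tζ_b, 1]]. Then the matrix P = D⁻¹ · (Aᵀ)⁻¹ · D · A is conjugate in GL(3,ℝ) to the matrix [[−1,1,0],[0,−1,0],[0,0,1]]; in particular P is not diagonalizable. -/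
/-!
An explicit conjugator `M` satisfies `D A M = Aᵀ D (M J)`, a polynomial identity in `ζt, ζb`;
hence `P M = M J` as soon as `A`, `D` and `M` are invertible, which holds for `ζt² ≠ 1 ≠ ζb²`.
The Jordan form `J` is not diagonalizable: a diagonal matrix conjugate to it has the same
characteristic polynomial `(X + 1)² (X - 1)`, so its entries are `±1` and it squares to `1`,
whereas `J² ≠ 1`.
-/

open Matrix

theorem isConj_iff_exists_units_inv_mul_mul_eq {α : Type*} [Monoid α] {a b : α} :
    IsConj a b ↔ ∃ c : αˣ, ↑c⁻¹ * b * ↑c = a := by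
  refine exists_congr fun c => ?_
  rw [SemiconjBy, mul_assoc, Units.inv_mul_eq_iff_eq_mul, eq_comm]

namespace Matrix

variable {R n : Type*} [CommRing R] [Fintype n] [DecidableEq n]

theorem charpoly_eq_of_isConj {M N : Matrix n n R} (h : IsConj M N) :
    M.charpoly = N.charpoly := by
  obtain ⟨c, rfl⟩ := isConj_iff_exists_units_inv_mul_mul_eq.mp h
  rw [charpoly_mul_comm, ← mul_assoc, Units.mul_inv, one_mul]

theorem exists_diag_eq_of_isConj_diagonal [IsDomain R] [LinearOrder n] {M : Matrix n n R}
    (hM : M.IsUpperTriangular) {d : n → R} (h : IsConj M (diagonal d)) (i : n) :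
    ∃ j, M j j = d i := by
  have hroot : ((diagonal d).charpoly).eval (d i) = 0 := by
    rw [charpoly_diagonal, Polynomial.eval_prod]
    exact Finset.prod_eq_zero (Finset.mem_univ i) (by simp)
  rw [← charpoly_eq_of_isConj h, charpoly_of_isUpperTriangular M hM, Polynomial.eval_prod,
    Finset.prod_eq_zero_iff] at hroot
  obtain ⟨j, -, hj⟩ := hroot
  exact ⟨j, by simpa [sub_eq_zero, eq_comm] using hj⟩

end Matrix

def jordanNegOne : Matrix (Fin 3) (Fin 3) ℝ := !![-1, 1, 0; 0, -1, 0; 0, 0, 1]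

theorem jordanNegOne_isUpperTriangular : jordanNegOne.IsUpperTriangular := by
  intro i j hij
  fin_cases i <;> fin_cases j <;> simp_all [jordanNegOne]

theorem jordanNegOne_sq_ne_one : jordanNegOne ^ 2 ≠ 1 := by
  intro h
  have h01 := congrFun (congrFun h 0) 1
  simp [jordanNegOne, sq, mul_apply, Fin.sum_univ_three] at h01

theorem not_isConj_jordanNegOne_diagonal (d : Fin 3 → ℝ) :
    ¬ IsConj jordanNegOne (diagonal d) := by
  intro h
  have hd : ∀ i, d i ^ 2 = 1 := fun i => by
    obtain ⟨j, hj⟩ := exists_diag_eq_of_isConj_diagonal jordanNegOne_isUpperTriangular h i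
    rw [← hj]
    fin_cases j <;> norm_num [jordanNegOne]
  have hsq : diagonal d ^ 2 = 1 := by
    rw [diagonal_pow, ← diagonal_one]
    exact congrArg diagonal (funext hd)
  exact jordanNegOne_sq_ne_one (isConj_one_left.mp (hsq ▸ h.pow 2))

section Schwartz

variable (ζt ζb : ℝ)

def schwartzA : Matrix (Fin 3) (Fin 3) ℝ :=
  !![ζt * ζb - 1, ζt * (1 - ζt * ζb), ζb - ζt;
     ζb - ζt, 1 - ζt * ζb, ζt * ζb - 1;
     0, 1 - ζt ^ 2, 0]

def schwartzD : Matrix (Fin 3) (Fin 3) ℝ :=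
  !![1, -ζt, -ζb; -ζt, 1, ζt * ζb; -ζb, ζt * ζb, 1]

noncomputable def schwartzP : Matrix (Fin 3) (Fin 3) ℝ :=
  (schwartzD ζt ζb)⁻¹ * (schwartzA ζt ζb)ᵀ⁻¹ * schwartzD ζt ζb * schwartzA ζt ζb

/-- The middle entry is scaled so that the Jordan block of `-1` gets off-diagonal entry `1`. -/
noncomputable def schwartzConjugator : Matrix (Fin 3) (Fin 3) ℝ :=
  !![ζb, 0, 1; 0, (1 - ζb ^ 2) / 2, 0; 1, 0, ζb]

theorem det_schwartzA : (schwartzA ζt ζb).det = -((1 - ζt ^ 2) ^ 2 * (1 - ζb ^ 2)) := by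
  simp only [schwartzA, det_fin_three, of_apply, cons_val', cons_val_zero, cons_val_one, cons_val,
    cons_val_fin_one]
  ring

theorem det_schwartzD : (schwartzD ζt ζb).det = (1 - ζt ^ 2) * (1 - ζb ^ 2) := by
  simp only [schwartzD, det_fin_three, of_apply, cons_val', cons_val_zero, cons_val_one, cons_val,
    cons_val_fin_one]
  ring

theorem det_schwartzConjugator : (schwartzConjugator ζb).det = -((1 - ζb ^ 2) ^ 2 / 2) := by
  simp only [schwartzConjugator, det_fin_three, of_apply, cons_val', cons_val_zero, cons_val_one,
    cons_val, cons_val_fin_one]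
  ring

theorem schwartzD_mul_schwartzA_mul_schwartzConjugator :
    schwartzD ζt ζb * schwartzA ζt ζb * schwartzConjugator ζb =
      (schwartzA ζt ζb)ᵀ * schwartzD ζt ζb * (schwartzConjugator ζb * jordanNegOne) := by
  ext i j
  fin_cases i <;> fin_cases j <;>
    simp [schwartzA, schwartzD, schwartzConjugator, jordanNegOne, mul_apply, Fin.sum_univ_three] <;>
    ring

variable {ζt ζb}

theorem schwartzP_mul_schwartzConjugator (ht : ζt ^ 2 ≠ 1) (hb : ζb ^ 2 ≠ 1) :
    schwartzP ζt ζb * schwartzConjugator ζb = schwartzConjugator ζb * jordanNegOne := by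
  have ht' : 1 - ζt ^ 2 ≠ 0 := sub_ne_zero.mpr ht.symm
  have hb' : 1 - ζb ^ 2 ≠ 0 := sub_ne_zero.mpr hb.symm
  have hA : IsUnit (schwartzA ζt ζb)ᵀ.det := by
    rw [det_transpose, det_schwartzA]
    simp [ht', hb']
  have hD : IsUnit (schwartzD ζt ζb).det := by
    rw [det_schwartzD]
    simp [ht', hb']
  calc _ = (schwartzD ζt ζb)⁻¹ * ((schwartzA ζt ζb)ᵀ⁻¹ *
        (schwartzD ζt ζb * schwartzA ζt ζb * schwartzConjugator ζb)) := by
        simp only [schwartzP, mul_assoc]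
    _ = _ := by
        rw [schwartzD_mul_schwartzA_mul_schwartzConjugator, mul_assoc,
          nonsing_inv_mul_cancel_left (A := (schwartzA ζt ζb)ᵀ) _ hA,
          nonsing_inv_mul_cancel_left (A := schwartzD ζt ζb) _ hD]

theorem isConj_jordanNegOne_schwartzP (ht : ζt ^ 2 ≠ 1) (hb : ζb ^ 2 ≠ 1) :
    IsConj jordanNegOne (schwartzP ζt ζb) := by
  have hM : IsUnit (schwartzConjugator ζb).det := by
    rw [det_schwartzConjugator]
    simp [sub_ne_zero.mpr hb.symm]
  exact ⟨((isUnit_iff_isUnit_det _).mpr hM).unit,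
    (schwartzP_mul_schwartzConjugator ht hb).symm⟩

end Schwartz

/-- For a convex marked box, the matrix `P = D⁻¹ (Aᵀ)⁻¹ D A` is conjugate in `GL(3,ℝ)`
to `[[−1,1,0],[0,−1,0],[0,0,1]]`; in particular `P` is not diagonalizable. -/
theorem schwartz_P_conjugate_nondiagonalizable (ζt ζb : ℝ)
    (ht : ζt ∈ Set.Ioo (-1 : ℝ) 1) (hb : ζb ∈ Set.Ioo (-1 : ℝ) 1) :
    let A : Matrix (Fin 3) (Fin 3) ℝ :=
      !![ζt * ζb - 1, ζt * (1 - ζt * ζb), ζb - ζt;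
         ζb - ζt, 1 - ζt * ζb, ζt * ζb - 1;
         0, 1 - ζt ^ 2, 0]
    let D : Matrix (Fin 3) (Fin 3) ℝ :=
      !![1, -ζt, -ζb; -ζt, 1, ζt * ζb; -ζb, ζt * ζb, 1]
    let P : Matrix (Fin 3) (Fin 3) ℝ := D⁻¹ * (Aᵀ)⁻¹ * D * A
    (∃ Q : GL (Fin 3) ℝ,
      (↑(Q⁻¹) : Matrix (Fin 3) (Fin 3) ℝ) * P * (↑Q : Matrix (Fin 3) (Fin 3) ℝ) =
        !![(-1 : ℝ), 1, 0; 0, -1, 0; 0, 0, 1]) ∧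
    ¬ ∃ (Q : GL (Fin 3) ℝ) (d : Fin 3 → ℝ),
      (↑(Q⁻¹) : Matrix (Fin 3) (Fin 3) ℝ) * P * (↑Q : Matrix (Fin 3) (Fin 3) ℝ) = Matrix.diagonal d := by
  intro A D P
  have sq_ne_one {x : ℝ} (hx : x ∈ Set.Ioo (-1 : ℝ) 1) : x ^ 2 ≠ 1 :=
    ((sq_lt_one_iff_abs_lt_one x).mpr (abs_lt.mpr hx)).ne
  have hP : IsConj jordanNegOne P := isConj_jordanNegOne_schwartzP (sq_ne_one ht) (sq_ne_one hb)
  refine ⟨isConj_iff_exists_units_inv_mul_mul_eq.mp hP, ?_⟩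
  rintro ⟨Q, d, hQ⟩
  exact not_isConj_jordanNegOne_diagonal d
    (hP.trans (isConj_iff_exists_units_inv_mul_mul_eq.mpr ⟨Q, hQ⟩).symm)
end

section
/- Let ζ_t, ζ_b ∈ (-1,1). The matrix A = [[ζ_tζ_b−1, ζ_t(1−ζ_tζ_b), ζ_b−ζ_t], [ζ_b−ζ_t, 1−ζ_tζ_b, ζ_tζ_b−1], [0, 1−ζ_t², 0]], viewed as a projective transformation, has order 3 in PGL(3,ℝ), i.e., A³ is a nonzero scalar multiple of the identity matrix but A itself is not a scalar multiple of the identity. -/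
/-- The matrix `A_Θ` has order 3 as a projective transformation: `A³` is a nonzero
scalar multiple of the identity, but `A` itself is not a scalar multiple of the identity. -/
theorem ATheta_order_three_projectively (ζt ζb : ℝ)
    (ht : ζt ∈ Set.Ioo (-1 : ℝ) 1) (hb : ζb ∈ Set.Ioo (-1 : ℝ) 1) :
    let A : Matrix (Fin 3) (Fin 3) ℝ :=
      !![ζt * ζb - 1, ζt * (1 - ζt * ζb), ζb - ζt;
         ζb - ζt, 1 - ζt * ζb, ζt * ζb - 1;
         0, 1 - ζt ^ 2, 0]
    (∃ c : ℝ, c ≠ 0 ∧ A ^ 3 = c • (1 : Matrix (Fin 3) (Fin 3) ℝ)) ∧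
    ¬ ∃ c : ℝ, A = c • (1 : Matrix (Fin 3) (Fin 3) ℝ) := by
  obtain ⟨ht1, ht2⟩ := ht
  obtain ⟨hb1, hb2⟩ := hb
  intro A
  constructor
  · refine ⟨-((1 - ζt ^ 2) ^ 2 * (1 - ζb ^ 2)), ?_, ?_⟩
    · have h1 : (1 : ℝ) - ζt ^ 2 > 0 := by nlinarith
      have h2 : (1 : ℝ) - ζb ^ 2 > 0 := by nlinarith
      have := mul_pos (mul_pos h1 h1) h2
      nlinarith [this]
    · have h3 : A ^ 3 = A * A * A := by rw [pow_succ, pow_succ, pow_one]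
      rw [h3]
      simp only [A]
      ext i j
      fin_cases i <;> fin_cases j <;>
        simp [Matrix.mul_apply, Fin.sum_univ_three, Matrix.one_apply] <;> ring
  · rintro ⟨c, hc⟩
    have h : A 2 1 = (c • (1 : Matrix (Fin 3) (Fin 3) ℝ)) 2 1 := by rw [hc]
    have h1 : (1 : ℝ) - ζt ^ 2 > 0 := by nlinarith
    simp [A, Matrix.one_apply] at h
    linarith
end

section
/- Let (ε,δ) ∈ ℝ² and let Σ = Σ_{(ε,δ)} = [[1,0,0],[0, e^{−δ}cosh(ε), −sinh(ε)],[0, −sinh(ε), e^{δ}cosh(ε)]]. The images under Σ of the four points [−1:1:0], [1:1:0], [1:0:1], [−1:0:1] all lie in the closed region {[x:y:z] : y+z ≠ 0, |x/(y+z)| ≤ 1, |(y−z)/(y+z)| ≤ 1} if and only if e^{−δ}cosh(ε) − sinh(ε) − 1 ≥ 0 and e^{δ}cosh(ε) − sinh(ε) − 1 ≥ 0. -/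
/-- The matrix `Σ_{(ε,δ)}`. -/
noncomputable def SigmaMat (ε δ : ℝ) : Matrix (Fin 3) (Fin 3) ℝ :=
  !![1, 0, 0;
     0, Real.exp (-δ) * Real.cosh ε, -Real.sinh ε;
     0, -Real.sinh ε, Real.exp δ * Real.cosh ε]

lemma SigmaMat_mv0 (ε δ x y z : ℝ) : (SigmaMat ε δ).mulVec ![x,y,z] 0 = x := by
  simp [SigmaMat, Matrix.mulVec, dotProduct, Fin.sum_univ_three]

lemma SigmaMat_mv1 (ε δ x y z : ℝ) : (SigmaMat ε δ).mulVec ![x,y,z] 1 =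
    Real.exp (-δ) * Real.cosh ε * y - Real.sinh ε * z := by
  simp [SigmaMat, Matrix.mulVec, dotProduct, Fin.sum_univ_three]; ring

lemma SigmaMat_mv2 (ε δ x y z : ℝ) : (SigmaMat ε δ).mulVec ![x,y,z] 2 =
    -Real.sinh ε * y + Real.exp δ * Real.cosh ε * z := by
  simp [SigmaMat, Matrix.mulVec, dotProduct, Fin.sum_univ_three]

lemma sigma_key (a b s : ℝ) (ha : 0 < a) (hb : 0 < b) (hab : a * b = s ^ 2 + 1) :
    ((a + -s ≠ 0 ∧ |-1 / (a + -s)| ≤ 1 ∧ |(a - -s) / (a + -s)| ≤ 1) ∧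
     (a + -s ≠ 0 ∧ |1 / (a + -s)| ≤ 1 ∧ |(a - -s) / (a + -s)| ≤ 1) ∧
     (-s + b ≠ 0 ∧ |1 / (-s + b)| ≤ 1 ∧ |(-s - b) / (-s + b)| ≤ 1) ∧
     (-s + b ≠ 0 ∧ |-1 / (-s + b)| ≤ 1 ∧ |(-s - b) / (-s + b)| ≤ 1)) ↔
    (a - s - 1 ≥ 0 ∧ b - s - 1 ≥ 0) := by
  constructor
  · rintro ⟨⟨h1, h2, h3⟩, -, ⟨h4, h5, h6⟩, -⟩
    have hp1 : 0 < |a + -s| := abs_pos.mpr h1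
    have hp2 : 0 < |-s + b| := abs_pos.mpr h4
    rw [abs_div, abs_neg, abs_one, div_le_one hp1] at h2
    rw [abs_div, abs_one, div_le_one hp2] at h5
    rw [abs_div, div_le_one hp1] at h3
    rw [abs_div, div_le_one hp2] at h6
    -- deduce s ≤ 0
    have hs : s ≤ 0 := by
      nlinarith [mul_self_le_mul_self (abs_nonneg (a - -s)) h3, sq_abs (a - -s),
        sq_abs (a + -s), ha, sq_nonneg (a + s), sq_nonneg (a - s)]
    have hpa : 0 < a + -s := by linarith
    have hpb : 0 < -s + b := by linarith
    rw [abs_of_pos hpa] at h2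
    rw [abs_of_pos hpb] at h5
    exact ⟨by linarith, by linarith⟩
  · rintro ⟨h1, h2⟩
    have hs : s ≤ 0 := by
      nlinarith [mul_nonneg h1 h2, sq_nonneg (s + 1), sq_nonneg s, ha, hb]
    have hpa : 0 < a + -s := by linarith
    have hpb : 0 < -s + b := by linarith
    have c1 : |-1 / (a + -s)| ≤ 1 := by
      rw [abs_div, abs_neg, abs_one, div_le_one (abs_pos.mpr hpa.ne'), abs_of_pos hpa]
      linarith
    have c2 : |1 / (a + -s)| ≤ 1 := by
      rw [abs_div, abs_one, div_le_one (abs_pos.mpr hpa.ne'), abs_of_pos hpa]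
      linarith
    have c3 : |(a - -s) / (a + -s)| ≤ 1 := by
      rw [abs_div, abs_of_pos hpa, div_le_one hpa, abs_le]
      constructor <;> linarith
    have c4 : |1 / (-s + b)| ≤ 1 := by
      rw [abs_div, abs_one, div_le_one (abs_pos.mpr hpb.ne'), abs_of_pos hpb]
      linarith
    have c5 : |-1 / (-s + b)| ≤ 1 := by
      rw [abs_div, abs_neg, abs_one, div_le_one (abs_pos.mpr hpb.ne'), abs_of_pos hpb]
      linarith
    have c6 : |(-s - b) / (-s + b)| ≤ 1 := by
      rw [abs_div, abs_of_pos hpb, div_le_one hpb, abs_le]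
      constructor <;> linarith
    exact ⟨⟨hpa.ne', c1, c3⟩, ⟨hpa.ne', c2, c3⟩, ⟨hpb.ne', c4, c6⟩, hpb.ne', c5, c6⟩

/-- The images under `Σ_{(ε,δ)}` of the four vertices `p, q, r, s` all lie in the closed
standard box region iff `e^{−δ}cosh ε − sinh ε − 1 ≥ 0` and `e^{δ}cosh ε − sinh ε − 1 ≥ 0`. -/
theorem Sigma_preserves_box_iff (ε δ : ℝ) :
    (∀ p ∈ ({![-1, 1, 0], ![1, 1, 0], ![1, 0, 1], ![-1, 0, 1]} : Set (Fin 3 → ℝ)),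
      (SigmaMat ε δ).mulVec p 1 + (SigmaMat ε δ).mulVec p 2 ≠ 0 ∧
      |(SigmaMat ε δ).mulVec p 0 /
        ((SigmaMat ε δ).mulVec p 1 + (SigmaMat ε δ).mulVec p 2)| ≤ 1 ∧
      |((SigmaMat ε δ).mulVec p 1 - (SigmaMat ε δ).mulVec p 2) /
        ((SigmaMat ε δ).mulVec p 1 + (SigmaMat ε δ).mulVec p 2)| ≤ 1) ↔
    (Real.exp (-δ) * Real.cosh ε - Real.sinh ε - 1 ≥ 0 ∧
     Real.exp δ * Real.cosh ε - Real.sinh ε - 1 ≥ 0) := by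
  have ha : 0 < Real.exp (-δ) * Real.cosh ε :=
    mul_pos (Real.exp_pos _) (Real.cosh_pos ε)
  have hb : 0 < Real.exp δ * Real.cosh ε :=
    mul_pos (Real.exp_pos _) (Real.cosh_pos ε)
  have hexp : Real.exp (-δ) * Real.exp δ = 1 := by
    rw [← Real.exp_add]; simp
  have hcosh : Real.cosh ε ^ 2 = 1 + Real.sinh ε ^ 2 := by
    have := Real.cosh_sq_sub_sinh_sq ε
    nlinarith
  have hab : (Real.exp (-δ) * Real.cosh ε) * (Real.exp δ * Real.cosh ε) =
      Real.sinh ε ^ 2 + 1 := by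
    nlinarith [hexp, hcosh, Real.exp_pos δ, Real.exp_pos (-δ)]
  simp only [Set.mem_insert_iff, Set.mem_singleton_iff, forall_eq_or_imp, forall_eq,
    SigmaMat_mv0, SigmaMat_mv1, SigmaMat_mv2, mul_one, mul_zero, sub_zero, zero_sub,
    add_zero, zero_add, neg_mul, one_mul]
  exact sigma_key _ _ _ ha hb hab
end

section
/- Let A, B ∈ GL(3,ℝ), and suppose there exists an invertible symmetric matrix S with B = S⁻¹ · (Aᵀ)⁻¹ · S. Then det(Id − A·B) = 0. -/
open Matrix

/-- If `B = S⁻¹ (Aᵀ)⁻¹ S` for an invertible symmetric `S`, then `det(Id − AB) = 0`. -/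
theorem det_id_sub_mul_eq_zero (A B S : Matrix (Fin 3) (Fin 3) ℝ)
    (hA : IsUnit A.det) (hB : IsUnit B.det)
    (hS : S.IsSymm) (hSu : IsUnit S.det)
    (hB' : B = S⁻¹ * (Aᵀ)⁻¹ * S) :
    (1 - A * B).det = 0 := by
  set M : Matrix (Fin 3) (Fin 3) ℝ := S * A⁻¹ - (Aᵀ)⁻¹ * S with hM
  have hMT : Mᵀ = -M := by
    rw [hM, transpose_sub, transpose_mul, transpose_mul, transpose_nonsing_inv,
      transpose_nonsing_inv, transpose_transpose, hS.eq, neg_sub]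
  have hMdet : M.det = 0 := by
    have h1 : M.det = Mᵀ.det := (det_transpose M).symm
    rw [hMT, det_neg] at h1
    simp at h1
    linarith
  have hfact : 1 - A * B = A * S⁻¹ * M := by
    rw [hB', hM]
    rw [Matrix.mul_sub]
    rw [show A * S⁻¹ * (S * A⁻¹) = A * (S⁻¹ * S) * A⁻¹ by
        simp [Matrix.mul_assoc],
      Matrix.nonsing_inv_mul S hSu, Matrix.mul_one, Matrix.mul_nonsing_inv A hA]
    simp [Matrix.mul_assoc]
  rw [hfact, det_mul, det_mul, hMdet, mul_zero]
end

section
/- Let A ∈ GL(3,ℝ) be conjugate to μ·R_θ where μ ≠ 0, 0 < θ < π, and R_θ = [[1,0,0],[0,cos θ,−sin θ],[0,sin θ,cos θ]], and let B = G⁻¹·(Aᵀ)⁻¹·G for some G ∈ GL(3,ℝ). Then det(Id − A·B) = 0 if and only if there exists a nonzero symmetric 3×3 matrix S with S·B = (Aᵀ)⁻¹·S. -/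
open Matrix

theorem sub_fin_three' (a b c d e f g h i a' b' c' d' e' f' g' h' i' : ℝ) :
    (!![a,b,c;d,e,f;g,h,i]) - !![a',b',c';d',e',f';g',h',i']
      = !![a-a',b-b',c-c';d-d',e-e',f-f';g-g',h-h',i-i'] := by
  ext i j; fin_cases i <;> fin_cases j <;> rfl

theorem transpose_fin_three' (a b c d e f g h i : ℝ) :
    (!![a,b,c;d,e,f;g,h,i])ᵀ = !![a,d,g;b,e,h;c,f,i] := by
  ext i j; fin_cases i <;> fin_cases j <;> rfl

theorem det_fin_three_lit (a b c d e f g h i : ℝ) :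
    (!![a,b,c;d,e,f;g,h,i]).det = a*e*i - a*f*h - b*d*i + b*f*g + c*d*h - c*e*g := by
  simp [Matrix.det_fin_three]

theorem fin3_ext {a b c d e f g h i a' b' c' d' e' f' g' h' i' : ℝ}
    (h1 : a = a') (h2 : b = b') (h3 : c = c') (h4 : d = d') (h5 : e = e')
    (h6 : f = f') (h7 : g = g') (h8 : h = h') (h9 : i = i') :
    !![a,b,c;d,e,f;g,h,i] = !![a',b',c';d',e',f';g',h',i'] := by
  rw [h1,h2,h3,h4,h5,h6,h7,h8,h9]

theorem mulVec3 (a b c d e f g h i x y z : ℝ) :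
    !![a,b,c;d,e,f;g,h,i] *ᵥ ![x,y,z] = ![a*x+b*y+c*z, d*x+e*y+f*z, g*x+h*y+i*z] := by
  funext k; fin_cases k <;>
    simp [Matrix.mulVec, dotProduct, Fin.sum_univ_three]

theorem det_identity (c s : ℝ) (hcs : c^2 + s^2 = 1)
    (h00 h01 h02 h10 h11 h12 h20 h21 h22 : ℝ) :
    (!![h00,h01,h02;h10,h11,h12;h20,h21,h22] * (!![1,0,0;0,c,-s;0,s,c])ᵀ
      - !![1,0,0;0,c,-s;0,s,c] * !![h00,h01,h02;h10,h11,h12;h20,h21,h22]).det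
    = (2*s - 2*c*s) * (!![0, h21 - h12, h11 + h22; h02, -h20, -h10; -h01, h10, -h20]).det := by
  rw [transpose_fin_three', Matrix.mul_fin_three, Matrix.mul_fin_three, sub_fin_three',
    det_fin_three_lit, det_fin_three_lit]
  linear_combination (s*(h02*h20*h21 - h02*h12*h20 + h02*h10*h22 + h02*h10*h11
    - h01*h20*h22 - h01*h11*h20 + h01*h10*h21 - h01*h10*h12)) * hcs

theorem key_lit (c s : ℝ) (hcs : c^2 + s^2 = 1) (hs : s ≠ 0)
    (h00 h01 h02 h10 h11 h12 h20 h21 h22 : ℝ) :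
    (!![h00,h01,h02;h10,h11,h12;h20,h21,h22] * (!![1,0,0;0,c,-s;0,s,c])ᵀ
      - !![1,0,0;0,c,-s;0,s,c] * !![h00,h01,h02;h10,h11,h12;h20,h21,h22]).det = 0 ↔
      ∃ T : Matrix (Fin 3) (Fin 3) ℝ, T ≠ 0 ∧
        (T * !![h00,h01,h02;h10,h11,h12;h20,h21,h22]).IsSymm ∧
        T * !![1,0,0;0,c,-s;0,s,c] = !![1,0,0;0,c,-s;0,s,c] * T := by
  have hc1 : c ≠ 1 := by intro h; apply hs; nlinarith
  have h2c : (2 - 2*c) ≠ 0 := fun h => hc1 (by linarith)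
  have hfac : (2*s - 2*c*s) ≠ 0 := by
    intro h
    rcases mul_eq_zero.mp (show s * (2 - 2*c) = 0 by linear_combination h) with h' | h'
    · exact hs h'
    · exact h2c h'
  rw [det_identity c s hcs, mul_eq_zero, or_iff_right hfac,
    ← Matrix.exists_mulVec_eq_zero_iff]
  constructor
  · rintro ⟨v, hv, hMv⟩
    have hv3 : v = ![v 0, v 1, v 2] := by funext i; fin_cases i <;> rfl
    rw [hv3, mulVec3] at hMv
    set a := v 0 with ha; set b := v 1 with hb; set d := v 2 with hd
    have e0 : (h21 - h12)*b + (h11 + h22)*d = 0 := by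
      have := congrFun hMv 0; simp at this; linear_combination this
    have e1 : h02*a - h20*b - h10*d = 0 := by
      have := congrFun hMv 1; simp at this; linear_combination this
    have e2 : -(h01*a) + h10*b - h20*d = 0 := by
      have := congrFun hMv 2; simp at this; linear_combination this
    refine ⟨!![a,0,0;0,b,-d;0,d,b], ?_, ?_, ?_⟩
    · intro h
      apply hv
      have h0 : a = 0 := by have := congrFun (congrFun h 0) 0; simpa using this
      have h1 : b = 0 := by have := congrFun (congrFun h 1) 1; simpa using this
      have h2 : d = 0 := by have := congrFun (congrFun h 2) 1; simpa using this
      rw [hv3, h0, h1, h2]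
      funext i; fin_cases i <;> rfl
    · unfold Matrix.IsSymm
      rw [Matrix.mul_fin_three, transpose_fin_three']
      exact fin3_ext (by ring) (by linear_combination e2) (by linear_combination -e1)
        (by linear_combination -e2) (by ring) (by linear_combination e0)
        (by linear_combination e1) (by linear_combination -e0) (by ring)
    · rw [Matrix.mul_fin_three, Matrix.mul_fin_three]
      exact fin3_ext (by ring) (by ring) (by ring) (by ring) (by ring) (by ring)
        (by ring) (by ring) (by ring)
  · rintro ⟨T, hT0, hTsymm, hTR⟩
    unfold Matrix.IsSymm at hTsymm
    rw [Matrix.eta_fin_three T] at hTR hTsymm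
    rw [Matrix.mul_fin_three, Matrix.mul_fin_three] at hTR
    rw [Matrix.mul_fin_three, transpose_fin_three'] at hTsymm
    set t00 := T 0 0; set t01 := T 0 1; set t02 := T 0 2
    set t10 := T 1 0; set t11 := T 1 1; set t12 := T 1 2
    set t20 := T 2 0; set t21 := T 2 1; set t22 := T 2 2
    have eq01 : c*t01 + s*t02 = t01 := by
      have := congrFun (congrFun hTR 0) 1; simp at this; linear_combination this
    have eq02 : -(s*t01) + c*t02 = t02 := by
      have := congrFun (congrFun hTR 0) 2; simp at this; linear_combination this
    have eq10 : t10 = c*t10 - s*t20 := by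
      have := congrFun (congrFun hTR 1) 0; simp at this; linear_combination this
    have eq20 : t20 = s*t10 + c*t20 := by
      have := congrFun (congrFun hTR 2) 0; simp at this; linear_combination this
    have eq11 : c*t11 + s*t12 = c*t11 - s*t21 := by
      have := congrFun (congrFun hTR 1) 1; simp at this; linear_combination this
    have eq12 : -(s*t11) + c*t12 = c*t12 - s*t22 := by
      have := congrFun (congrFun hTR 1) 2; simp at this; linear_combination this
    have z01 : t01 = 0 := by
      have h : (2 - 2*c) * t01 = 0 := by
        linear_combination (c-1)*eq01 - s*eq02 - t01 * hcs
      exact (mul_eq_zero.mp h).resolve_left h2c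
    have z02 : t02 = 0 := by
      have h : (2 - 2*c) * t02 = 0 := by
        linear_combination s*eq01 + (c-1)*eq02 - t02 * hcs
      exact (mul_eq_zero.mp h).resolve_left h2c
    have z10 : t10 = 0 := by
      have h : (2 - 2*c) * t10 = 0 := by
        linear_combination (1-c)*eq10 - s*eq20 - t10 * hcs
      exact (mul_eq_zero.mp h).resolve_left h2c
    have z20 : t20 = 0 := by
      have h : (2 - 2*c) * t20 = 0 := by
        linear_combination s*eq10 + (1-c)*eq20 - t20 * hcs
      exact (mul_eq_zero.mp h).resolve_left h2c
    have r1 : t22 = t11 := by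
      have h : s * (t22 - t11) = 0 := by linear_combination eq12
      have := (mul_eq_zero.mp h).resolve_left hs
      linarith
    have r2 : t12 = -t21 := by
      have h : s * (t12 + t21) = 0 := by linear_combination eq11
      have := (mul_eq_zero.mp h).resolve_left hs
      linarith
    have f01 : t00*h01 + t01*h11 + t02*h21 = t10*h00 + t11*h10 + t12*h20 := by
      have := congrFun (congrFun hTsymm 1) 0; simp at this; linear_combination this
    have f02 : t00*h02 + t01*h12 + t02*h22 = t20*h00 + t21*h10 + t22*h20 := by
      have := congrFun (congrFun hTsymm 2) 0; simp at this; linear_combination this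
    have f12 : t10*h02 + t11*h12 + t12*h22 = t20*h01 + t21*h11 + t22*h21 := by
      have := congrFun (congrFun hTsymm 2) 1; simp at this; linear_combination this
    refine ⟨![t00, t11, t21], ?_, ?_⟩
    · intro h
      apply hT0
      have h0 : t00 = 0 := by have := congrFun h 0; simpa using this
      have h1 : t11 = 0 := by have := congrFun h 1; simpa using this
      have h2 : t21 = 0 := by have := congrFun h 2; simpa using this
      rw [Matrix.eta_fin_three T]
      have hz : (0 : Matrix (Fin 3) (Fin 3) ℝ) = !![0,0,0;0,0,0;0,0,0] := by
        ext i j; fin_cases i <;> fin_cases j <;> rfl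
      rw [hz]
      exact fin3_ext h0 z01 z02 z10 h1 (by show t12 = 0; rw [r2, h2]; ring) z20 h2 (by show t22 = 0; rw [r1, h1])
    · rw [mulVec3]
      have hz : (0 : Fin 3 → ℝ) = ![0,0,0] := by funext i; fin_cases i <;> rfl
      rw [hz]
      funext i; fin_cases i
      · show 0*t00 + (h21 - h12)*t11 + (h11 + h22)*t21 = 0
        linear_combination -f12 + h02*z10 - h01*z20 + h22*r2 - h21*r1
      · show h02*t00 + -h20*t11 + -h10*t21 = 0
        linear_combination f02 - h12*z01 - h22*z02 + h00*z20 + h20*r1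
      · show -h01*t00 + h10*t11 + -h20*t21 = 0
        linear_combination -f01 + h11*z01 + h21*z02 - h00*z10 - h20*r2

theorem key_lemma (c s : ℝ) (hcs : c^2 + s^2 = 1) (hs : s ≠ 0)
    (H : Matrix (Fin 3) (Fin 3) ℝ) :
    (H * (!![1,0,0;0,c,-s;0,s,c])ᵀ - !![1,0,0;0,c,-s;0,s,c] * H).det = 0 ↔
      ∃ T : Matrix (Fin 3) (Fin 3) ℝ, T ≠ 0 ∧ (T * H).IsSymm ∧
        T * !![1,0,0;0,c,-s;0,s,c] = !![1,0,0;0,c,-s;0,s,c] * T := by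
  have := key_lit c s hcs hs (H 0 0) (H 0 1) (H 0 2) (H 1 0) (H 1 1) (H 1 2)
    (H 2 0) (H 2 1) (H 2 2)
  rw [← Matrix.eta_fin_three H] at this
  exact this

theorem key_lemma' (c s : ℝ) (hcs : c^2 + s^2 = 1) (hs : s ≠ 0)
    (R H : Matrix (Fin 3) (Fin 3) ℝ) (hR : R = !![1,0,0;0,c,-s;0,s,c]) :
    (H * Rᵀ - R * H).det = 0 ↔
      ∃ T : Matrix (Fin 3) (Fin 3) ℝ, T ≠ 0 ∧ (T * H).IsSymm ∧ T * R = R * T := by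
  rw [hR]; exact key_lemma c s hcs hs H

theorem mulCancel {P Pi : Matrix (Fin 3) (Fin 3) ℝ} (h : P * Pi = 1)
    (Y : Matrix (Fin 3) (Fin 3) ℝ) : P * (Pi * Y) = Y := by
  rw [← Matrix.mul_assoc, h, Matrix.one_mul]

theorem symm_conj {Pi W : Matrix (Fin 3) (Fin 3) ℝ} (hW : Wᵀ = W) :
    (Piᵀ * (W * Pi))ᵀ = Piᵀ * (W * Pi) := by
  calc (Piᵀ * (W * Pi))ᵀ = (W * Pi)ᵀ * Pi := by
        rw [Matrix.transpose_mul, Matrix.transpose_transpose]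
    _ = (Piᵀ * Wᵀ) * Pi := by rw [Matrix.transpose_mul]
    _ = Piᵀ * (W * Pi) := by rw [hW, Matrix.mul_assoc]

/-- The rotation matrix `R_θ`. -/
noncomputable def Rtheta (θ : ℝ) : Matrix (Fin 3) (Fin 3) ℝ :=
  !![1, 0, 0; 0, Real.cos θ, -Real.sin θ; 0, Real.sin θ, Real.cos θ]

/-- Let `A` be a rotation of angle `θ` with `0 < θ < π`, and `B = G⁻¹ (Aᵀ)⁻¹ G`.
Then `det(Id − AB) = 0` iff there is a nonzero symmetric `S` with `S B = (Aᵀ)⁻¹ S`. -/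
theorem appendix_lemma (A B : Matrix (Fin 3) (Fin 3) ℝ) (θ : ℝ)
    (hθ₀ : 0 < θ) (hθπ : θ < Real.pi)
    (hrot : ∃ (Q : GL (Fin 3) ℝ) (μ : ℝ), μ ≠ 0 ∧
      (↑(Q⁻¹) : Matrix (Fin 3) (Fin 3) ℝ) * A * (↑Q : Matrix (Fin 3) (Fin 3) ℝ) = μ • Rtheta θ)
    (hB : ∃ G : GL (Fin 3) ℝ,
      B = (↑(G⁻¹) : Matrix (Fin 3) (Fin 3) ℝ) * (Aᵀ)⁻¹ * (↑G : Matrix (Fin 3) (Fin 3) ℝ)) :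
    (1 - A * B).det = 0 ↔
      ∃ S : Matrix (Fin 3) (Fin 3) ℝ, S ≠ 0 ∧ S.IsSymm ∧ S * B = (Aᵀ)⁻¹ * S := by
  obtain ⟨Q, μ, hμ, hQA⟩ := hrot
  obtain ⟨G, hBG⟩ := hB
  set c := Real.cos θ with hcdef
  set s := Real.sin θ with hsdef
  have hc : c^2 + s^2 = 1 := Real.cos_sq_add_sin_sq θ
  have hs : s ≠ 0 := ne_of_gt (Real.sin_pos_of_pos_of_lt_pi hθ₀ hθπ)
  set R : Matrix (Fin 3) (Fin 3) ℝ := !![1,0,0;0,c,-s;0,s,c] with hRdef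
  have hRth : Rtheta θ = R := rfl
  rw [hRth] at hQA
  set q := (↑Q : Matrix (Fin 3) (Fin 3) ℝ) with hqdef
  set qi := (↑(Q⁻¹) : Matrix (Fin 3) (Fin 3) ℝ) with hqidef
  set g := (↑G : Matrix (Fin 3) (Fin 3) ℝ) with hgdef
  set gi := (↑(G⁻¹) : Matrix (Fin 3) (Fin 3) ℝ) with hgidef
  have hq : q * qi = 1 := Q.mul_inv
  have hq' : qi * q = 1 := Q.inv_mul
  have hg : g * gi = 1 := G.mul_inv
  have hg' : gi * g = 1 := G.inv_mul
  have hqT : qᵀ * qiᵀ = 1 := by rw [← Matrix.transpose_mul, hq', Matrix.transpose_one]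
  have hqT' : qiᵀ * qᵀ = 1 := by rw [← Matrix.transpose_mul, hq, Matrix.transpose_one]
  have hμμ : μ * μ⁻¹ = 1 := mul_inv_cancel₀ hμ
  have hμμ' : μ⁻¹ * μ = 1 := inv_mul_cancel₀ hμ
  have hRR' : R * Rᵀ = 1 := by
    rw [hRdef, transpose_fin_three', Matrix.mul_fin_three, Matrix.one_fin_three]
    exact fin3_ext (by ring) (by ring) (by ring) (by ring) (by linear_combination hc)
      (by ring) (by ring) (by ring) (by linear_combination hc)
  have hR'R : Rᵀ * R = 1 := by
    rw [hRdef, transpose_fin_three', Matrix.mul_fin_three, Matrix.one_fin_three]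
    exact fin3_ext (by ring) (by ring) (by ring) (by ring) (by linear_combination hc)
      (by ring) (by ring) (by ring) (by linear_combination hc)
  have hA : A = μ • (q * (R * qi)) := by
    have h1 := congrArg (fun Z => q * (Z * qi)) hQA
    simp only [Matrix.mul_assoc, smul_mul_assoc, mul_smul_comm, smul_smul, hμμ, hμμ', one_smul,
      mulCancel hq, mulCancel hq', mulCancel hg, mulCancel hg', mulCancel hqT,
      mulCancel hqT', mulCancel hRR', mulCancel hR'R, hq, hq', hg, hg', hqT, hqT',
      hRR', hR'R, mul_one, one_mul] at h1
    exact h1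
  have hN : (Aᵀ)⁻¹ = μ⁻¹ • (qiᵀ * (R * qᵀ)) := by
    apply Matrix.inv_eq_right_inv
    rw [hA]
    simp only [Matrix.transpose_mul, Matrix.transpose_smul, Matrix.transpose_transpose,
      Matrix.mul_assoc, smul_mul_assoc, mul_smul_comm, smul_smul, hμμ, hμμ', one_smul,
      mulCancel hq, mulCancel hq', mulCancel hg, mulCancel hg', mulCancel hqT,
      mulCancel hqT', mulCancel hRR', mulCancel hR'R, hq, hq', hg, hg', hqT, hqT',
      hRR', hR'R, mul_one, one_mul]
  have hABeq : q * ((R * ((qi * (gi * qiᵀ)) * (R * (qᵀ * (g * q))))) * qi) = A * B := by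
    rw [hA, hBG, hN]
    simp only [Matrix.mul_assoc, smul_mul_assoc, mul_smul_comm, smul_smul, hμμ, hμμ', one_smul,
      mulCancel hq, mulCancel hq', mulCancel hg, mulCancel hg', mulCancel hqT,
      mulCancel hqT', mulCancel hRR', mulCancel hR'R, hq, hq', hg, hg', hqT, hqT',
      hRR', hR'R, mul_one, one_mul]
  have h2 : q * ((1 - R * ((qi * (gi * qiᵀ)) * (R * (qᵀ * (g * q))))) * qi) = 1 - A * B := by
    rw [Matrix.sub_mul, Matrix.one_mul, Matrix.mul_sub, hq, hABeq]
  have hdq0 : q.det ≠ 0 :=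
    left_ne_zero_of_mul_eq_one (by rw [← Matrix.det_mul, hq, Matrix.det_one])
  have hdqi0 : qi.det ≠ 0 :=
    right_ne_zero_of_mul_eq_one
      (show q.det * qi.det = 1 by rw [← Matrix.det_mul, hq, Matrix.det_one])
  have hu1 : (R * (qi * (gi * qiᵀ))) * ((qᵀ * (g * q)) * Rᵀ) = 1 := by
    simp only [Matrix.mul_assoc, smul_mul_assoc, mul_smul_comm, smul_smul, hμμ, hμμ', one_smul,
      mulCancel hq, mulCancel hq', mulCancel hg, mulCancel hg', mulCancel hqT,
      mulCancel hqT', mulCancel hRR', mulCancel hR'R, hq, hq', hg, hg', hqT, hqT',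
      hRR', hR'R, mul_one, one_mul]
  have hfact : 1 - R * ((qi * (gi * qiᵀ)) * (R * (qᵀ * (g * q))))
      = (R * (qi * (gi * qiᵀ))) * ((qᵀ * (g * q)) * Rᵀ - R * (qᵀ * (g * q))) := by
    rw [Matrix.mul_sub, hu1]
    congr 1
    simp only [Matrix.mul_assoc]
  have hu1det : (R * (qi * (gi * qiᵀ))).det ≠ 0 :=
    (Matrix.isUnit_det_of_right_inverse hu1).ne_zero
  have hiff : (1 - A * B).det = 0 ↔
      ((qᵀ * (g * q)) * Rᵀ - R * (qᵀ * (g * q))).det = 0 := by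
    rw [← h2, Matrix.det_mul, Matrix.det_mul, hfact, Matrix.det_mul]
    constructor
    · intro h
      rcases mul_eq_zero.mp h with h | h
      · exact absurd h hdq0
      rcases mul_eq_zero.mp h with h | h
      swap
      · exact absurd h hdqi0
      rcases mul_eq_zero.mp h with h | h
      · exact absurd h hu1det
      exact h
    · intro h
      rw [h]
      ring
  rw [hiff, key_lemma' c s hc hs R (qᵀ * (g * q)) hRdef, hBG, hN]
  constructor
  · rintro ⟨T, hT0, hTsym, hTR⟩
    refine ⟨qiᵀ * ((T * (qᵀ * (g * q))) * qi), ?_, ?_, ?_⟩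
    · intro h
      apply hT0
      have hTback : T = qᵀ * ((qiᵀ * ((T * (qᵀ * (g * q))) * qi)) * (q * (qi * (gi * qiᵀ)))) := by
        simp only [Matrix.mul_assoc, smul_mul_assoc, mul_smul_comm, smul_smul, hμμ, hμμ', one_smul,
      mulCancel hq, mulCancel hq', mulCancel hg, mulCancel hg', mulCancel hqT,
      mulCancel hqT', mulCancel hRR', mulCancel hR'R, hq, hq', hg, hg', hqT, hqT',
      hRR', hR'R, mul_one, one_mul]
      rw [hTback, h]
      simp
    · exact symm_conj hTsym
    · simp only [Matrix.mul_assoc, smul_mul_assoc, mul_smul_comm, smul_smul, hμμ, hμμ', one_smul,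
      mulCancel hq, mulCancel hq', mulCancel hg, mulCancel hg', mulCancel hqT,
      mulCancel hqT', mulCancel hRR', mulCancel hR'R, hq, hq', hg, hg', hqT, hqT',
      hRR', hR'R, mul_one, one_mul]
      rw [show T * (R * (qᵀ * g)) = R * (T * (qᵀ * g)) from by
        rw [← Matrix.mul_assoc, hTR, Matrix.mul_assoc]]
  · rintro ⟨S, hS0, hSsym, hSB⟩
    refine ⟨qᵀ * (S * (gi * qiᵀ)), ?_, ?_, ?_⟩
    · intro h
      apply hS0
      have hSback : S = qiᵀ * (((qᵀ * (S * (gi * qiᵀ))) * (qᵀ * (g * q))) * qi) := by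
        simp only [Matrix.mul_assoc, smul_mul_assoc, mul_smul_comm, smul_smul, hμμ, hμμ', one_smul,
      mulCancel hq, mulCancel hq', mulCancel hg, mulCancel hg', mulCancel hqT,
      mulCancel hqT', mulCancel hRR', mulCancel hR'R, hq, hq', hg, hg', hqT, hqT',
      hRR', hR'R, mul_one, one_mul]
      rw [hSback, h]
      simp
    · show _ᵀ = _
      rw [show (qᵀ * (S * (gi * qiᵀ))) * (qᵀ * (g * q)) = qᵀ * (S * q) from by
        simp only [Matrix.mul_assoc, smul_mul_assoc, mul_smul_comm, smul_smul, hμμ, hμμ', one_smul,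
      mulCancel hq, mulCancel hq', mulCancel hg, mulCancel hg', mulCancel hqT,
      mulCancel hqT', mulCancel hRR', mulCancel hR'R, hq, hq', hg, hg', hqT, hqT',
      hRR', hR'R, mul_one, one_mul]]
      exact symm_conj hSsym
    · have h4 := congrArg (fun Z => qᵀ * (Z * (gi * qiᵀ))) hSB
      simp only [Matrix.mul_assoc, smul_mul_assoc, mul_smul_comm, smul_smul, hμμ, hμμ', one_smul,
      mulCancel hq, mulCancel hq', mulCancel hg, mulCancel hg', mulCancel hqT,
      mulCancel hqT', mulCancel hRR', mulCancel hR'R, hq, hq', hg, hg', hqT, hqT',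
      hRR', hR'R, mul_one, one_mul] at h4
      have h5 := smul_right_injective (Matrix (Fin 3) (Fin 3) ℝ) (inv_ne_zero hμ) h4
      simp only [Matrix.mul_assoc]
      exact h5
end
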